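/- For integers a, b, k with k ≥ b > a ≥ 1, m ≥ 2 and 0 ≤ h ≤ m−2: Σ_{λ ∈ BR'_{a,b,k}(m,h,a)} u^{ℓ_a(λ)} v^{ℓ_b(λ)} q^{|λ|} = (u q^a + v q^b) u^{h+1} v^{m−h−2} q^{(m−1)b + k·C(h+1,2) + (k−b+a)(h+1)} [m−2 choose h]_k, and Σ_{λ ∈ BR'_{a,b,k}(m,h,b)} u^{ℓ_a(λ)} v^{ℓ_b(λ)} q^{|λ|} = (u q^a + v q^b) u^{h} v^{m−h−1} q^{(m−1)b + k·C(h+1,2) + (k−b+a)h} [m−2 choose h]_k. -/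

import Mathlib

/-!
Every part of a partition in `BR'_{a,b,k}(m)` is `k c + a` or `k c + b` for a unique level `c`.
The difference conditions say exactly that a part `k c + a` is followed by a part of level `c - 1`
and a part `k c + b` by a part of level `c`, of either residue. Removing the largest part thus
gives, for the generating function `G(m, c)` (`brLevelGen`) of the partitions whose largest part
has level `c`, the recursion
`G(m + 1, c + 1) = u q^(k(c+1)+a) G(m, c) + v q^(k(c+1)+b) G(m, c + 1)`.
This is the q-Pascal rule satisfied by
`G(n + 1, c) = (u q^a + v q^b) u^c v^(n-c) q^(a c + b (n-c) + k C(c+1,2)) [n choose c]_{q^k}`.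
-/

/-- The finite q-Pochhammer symbol `(t;q)_n = ∏_{i=0}^{n-1} (1 - t qⁱ)`. -/
noncomputable def qPoch (t q : ℂ) (n : ℕ) : ℂ := ∏ i ∈ Finset.range n, (1 - t * q ^ i)

/-- The infinite q-Pochhammer symbol `(t;q)_∞ = ∏_{i≥0} (1 - t qⁱ)`. -/
noncomputable def qPochInf (t q : ℂ) : ℂ := ∏' i : ℕ, (1 - t * q ^ i)

/-- The Gaussian binomial coefficient `[A choose B]` in base `q`:
`(q;q)_A / ((q;q)_B (q;q)_{A-B})` for `A ≥ B ≥ 0`, and `0` otherwise. -/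
noncomputable def gbinom (q : ℂ) (A B : ℕ) : ℂ :=
  if B ≤ A then qPoch q q A / (qPoch q q B * qPoch q q (A - B)) else 0

/-- `lcount k c l` is the number of parts of `l` congruent to `c` modulo `k`. -/
def lcount (k c : ℕ) (l : List ℕ) : ℕ := (l.filter (fun x => x % k = c % k)).length

/-- Membership in `BR'_{a,b,k}(m)`: partitions `(λ_1,…,λ_m)` with exactly `m` parts, each
`≡ a` or `b (mod k)`, only parts `≡ b (mod k)` possibly repeated, `λ_m ∈ {a, b}`, and for
consecutive parts `λ_i - λ_{i+1} ≤ k` with strict inequality if `λ_{i+1} ≡ b (mod k)`. -/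
def memBR' (a b k m : ℕ) (l : List ℕ) : Prop :=
  l.Pairwise (· ≥ ·) ∧ l.length = m ∧
    (∀ x ∈ l, 0 < x ∧ (x % k = a % k ∨ x % k = b % k)) ∧
    (∀ x : ℕ, x % k = a % k → l.count x ≤ 1) ∧
    (l.getLast? = some a ∨ l.getLast? = some b) ∧
    l.Chain' (fun x y => x ≤ y + k ∧ (y % k = b % k → x < y + k))

theorem qPoch_zero (t q : ℂ) : qPoch t q 0 = 1 :=
  Finset.prod_range_zero _

theorem qPoch_succ (t q : ℂ) (n : ℕ) : qPoch t q (n + 1) = qPoch t q n * (1 - t * q ^ n) :=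
  Finset.prod_range_succ _ _

theorem qPoch_ne_zero {t q : ℂ} (ht : ‖t‖ < 1) (hq : ‖q‖ ≤ 1) (n : ℕ) : qPoch t q n ≠ 0 := by
  refine Finset.prod_ne_zero_iff.2 fun i _ => sub_ne_zero.2 fun h => ?_
  have : ‖t * q ^ i‖ < 1 := by
    rw [norm_mul, norm_pow]
    exact mul_lt_one_of_nonneg_of_lt_one_left (norm_nonneg t) ht (pow_le_one₀ (norm_nonneg q) hq)
  rw [← h, norm_one] at this
  exact this.false

theorem gbinom_add_left (Q : ℂ) (B C : ℕ) :
    gbinom Q (B + C) B = qPoch Q Q (B + C) / (qPoch Q Q B * qPoch Q Q C) := by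
  rw [gbinom, if_pos (Nat.le_add_right B C), Nat.add_sub_cancel_left]

theorem gbinom_of_lt (Q : ℂ) {A B : ℕ} (h : A < B) : gbinom Q A B = 0 :=
  if_neg h.not_ge

theorem gbinom_self {Q : ℂ} (hQ : ‖Q‖ < 1) (A : ℕ) : gbinom Q A A = 1 := by
  have h := gbinom_add_left Q A 0
  rwa [add_zero, qPoch_zero, mul_one, div_self (qPoch_ne_zero hQ hQ.le A)] at h

theorem gbinom_zero_right {Q : ℂ} (hQ : ‖Q‖ < 1) (A : ℕ) : gbinom Q A 0 = 1 := by
  have h := gbinom_add_left Q 0 A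
  rwa [zero_add, qPoch_zero, one_mul, div_self (qPoch_ne_zero hQ hQ.le A)] at h

theorem gbinom_succ_succ {Q : ℂ} (hQ : ‖Q‖ < 1) (A B : ℕ) :
    gbinom Q (A + 1) (B + 1) = gbinom Q A B + Q ^ (B + 1) * gbinom Q A (B + 1) := by
  rcases lt_trichotomy B A with h | rfl | h
  · obtain ⟨C, rfl⟩ := Nat.exists_eq_add_of_lt h
    have e₁ := gbinom_add_left Q (B + 1) (C + 1)
    have e₂ := gbinom_add_left Q B (C + 1)
    have e₃ := gbinom_add_left Q (B + 1) C
    rw [show B + 1 + (C + 1) = B + C + 1 + 1 by ring] at e₁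
    rw [show B + (C + 1) = B + C + 1 by ring] at e₂
    rw [show B + 1 + C = B + C + 1 by ring] at e₃
    rw [e₁, e₂, e₃, qPoch_succ Q Q (B + C + 1), qPoch_succ Q Q B, qPoch_succ Q Q C]
    have hne := qPoch_ne_zero hQ hQ.le
    have hB := qPoch_succ Q Q B ▸ hne (B + 1)
    have hC := qPoch_succ Q Q C ▸ hne (C + 1)
    field_simp [hne B, hne C, right_ne_zero_of_mul hB, right_ne_zero_of_mul hC]
    ring
  · rw [gbinom_self hQ, gbinom_self hQ, gbinom_of_lt Q (Nat.lt_succ_self B)]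
    ring
  · rw [gbinom_of_lt Q (by omega), gbinom_of_lt Q h, gbinom_of_lt Q (by omega)]
    ring

theorem List.forall_count_cons_le_one_iff {α : Type*} [DecidableEq α] {P : α → Prop} {p : α}
    {l : List α} :
    (∀ x, P x → (p :: l).count x ≤ 1) ↔ (∀ x, P x → l.count x ≤ 1) ∧ (P p → p ∉ l) := by
  refine ⟨fun h => ⟨fun x hx => ?_, fun hp hpl => ?_⟩, fun ⟨h, hp⟩ x hx => ?_⟩
  · exact (List.count_le_count_cons ..).trans (h x hx)
  · have := h p hp
    rw [List.count_cons_self] at this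
    exact List.count_pos_iff.2 hpl |>.ne' (by omega)
  · rw [List.count_cons]
    split_ifs with hpx
    · cases beq_iff_eq.1 hpx
      rw [List.count_eq_zero.2 (hp hx)]
    · simpa using h x hx

section Partitions

variable {a b k : ℕ}

def BRStep (a b k p p' : ℕ) : Prop :=
  p' ≤ p ∧ (p % k = a % k → p ≠ p') ∧ p ≤ p' + k ∧ (p' % k = b % k → p < p' + k)

theorem memBR'_cons_cons_iff {m p p' : ℕ} {l : List ℕ} :
    memBR' a b k (m + 1) (p :: p' :: l) ↔
      memBR' a b k m (p' :: l) ∧ (0 < p ∧ (p % k = a % k ∨ p % k = b % k)) ∧ BRStep a b k p p' := by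
  simp only [memBR', List.Chain', List.isChain_cons_cons, List.length_cons, List.forall_mem_cons,
    List.getLast?_cons_cons, List.pairwise_cons, List.forall_count_cons_le_one_iff, BRStep,
    Nat.add_right_cancel_iff]
  constructor
  · rintro ⟨⟨⟨hp'p, -⟩, hsort', hsort⟩, hlen, ⟨hp, hp'⟩, ⟨hcount, hnotin⟩, hlast, hstep, hchain⟩
    exact ⟨⟨⟨hsort', hsort⟩, hlen, hp', hcount, hlast, hchain⟩, hp,
      hp'p, fun ha h => hnotin ha (h ▸ List.mem_cons_self), hstep⟩
  · rintro ⟨⟨⟨hsort', hsort⟩, hlen, hp', hcount, hlast, hchain⟩, hp, hp'p, hne, hstep⟩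
    refine ⟨⟨⟨hp'p, fun x hx => (hsort' x hx).trans hp'p⟩, hsort', hsort⟩, hlen, ⟨hp, hp'⟩,
      ⟨hcount, fun ha hmem => ?_⟩, hlast, hstep, hchain⟩
    rcases List.mem_cons.1 hmem with h | h
    · exact hne ha h
    · exact hne ha (le_antisymm (hsort' p h) hp'p)

-- A part is written `k * c + cond x a b`: level `c`, residue `a` exactly when `x`.
theorem brStep_iff (ha : 1 ≤ a) (hab : a < b) (hbk : b ≤ k) {c c' : ℕ} {x y : Bool} :
    BRStep a b k (k * c + cond x a b) (k * c' + cond y a b) ↔ c = c' + x.toNat := by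
  have hamod : a % k = a := Nat.mod_eq_of_lt (by omega)
  have hbmod : b % k = b ∨ b = k ∧ b % k = 0 := by
    rcases hbk.lt_or_eq with h | h
    · exact Or.inl (Nat.mod_eq_of_lt h)
    · exact Or.inr ⟨h, h ▸ Nat.mod_self b⟩
  have hc : c = c' + x.toNat ∧ k * c = k * (c' + x.toNat) ∨
      c < c' + x.toNat ∧ k * (c + 1) ≤ k * (c' + x.toNat) ∨
      c' + x.toNat < c ∧ k * (c' + x.toNat + 1) ≤ k * c := by
    rcases lt_trichotomy c (c' + x.toNat) with h | h | h
    · exact Or.inr (Or.inl ⟨h, Nat.mul_le_mul_left k h⟩)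
    · exact Or.inl ⟨h, congrArg (k * ·) h⟩
    · exact Or.inr (Or.inr ⟨h, Nat.mul_le_mul_left k h⟩)
  rcases hbmod with hb | ⟨rfl, hb⟩ <;> cases x <;> cases y <;>
    simp only [BRStep, Nat.mul_add_mod, Bool.toNat_true, Bool.toNat_false, cond_true, cond_false,
      mul_add, mul_one, add_zero, hamod, hb, true_implies] at hc ⊢ <;> omega

theorem exists_eq_mul_add_cond (hab : a < b) (hbk : b ≤ k) {p : ℕ} (hp : 0 < p)
    (hpk : p % k = a % k ∨ p % k = b % k) : ∃ c y, p = k * c + cond y a b := by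
  have hdiv := Nat.div_add_mod p k
  rcases hpk with h | h
  · exact ⟨p / k, true, by rw [cond_true, ← Nat.mod_eq_of_lt (by omega : a < k), ← h, hdiv]⟩
  rcases hbk.lt_or_eq with hbk | rfl
  · exact ⟨p / k, false, by rw [cond_false, ← Nat.mod_eq_of_lt hbk, ← h, hdiv]⟩
  · rw [h, Nat.mod_self, add_zero] at hdiv
    obtain ⟨c, hc⟩ : ∃ c, p / b = c + 1 :=
      Nat.exists_eq_succ_of_ne_zero fun h0 => by rw [h0, mul_zero] at hdiv; omega
    refine ⟨c, false, ?_⟩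
    rw [hc, mul_add_one] at hdiv
    rw [cond_false, hdiv]

def brSet (a b k m p : ℕ) : Set (List ℕ) :=
  {l | memBR' a b k m l ∧ l.head? = some p}

theorem brSet_finite (m p : ℕ) : (brSet a b k m p).Finite := by
  refine ((List.finite_length_eq (Fin (p + 1)) m).image (List.map Fin.val)).subset ?_
  rintro (_ | ⟨p', l⟩) ⟨⟨hsort, hlen, -⟩, hhead⟩
  · simp at hhead
  obtain rfl : p' = p := by simpa using hhead
  have hle : ∀ x ∈ p' :: l, x < p' + 1 := by
    intro x hx
    rcases List.mem_cons.1 hx with rfl | hx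
    exacts [Nat.lt_succ_self x, Nat.lt_succ_of_le (List.rel_of_pairwise_cons hsort hx)]
  exact ⟨(p' :: l).pmap Fin.mk hle, by simpa using hlen, by simp [List.map_pmap]⟩

theorem memBR'_one_iff (ha : 0 < a) (hb : 0 < b) {l : List ℕ} :
    memBR' a b k 1 l ↔ l = [a] ∨ l = [b] := by
  constructor
  · rintro ⟨-, hlen, -, -, hlast, -⟩
    obtain ⟨p, rfl⟩ := List.length_eq_one_iff.1 hlen
    simpa using hlast
  · rintro (rfl | rfl) <;>
      exact ⟨List.pairwise_singleton _ _, rfl, by simp [ha, hb], fun _ _ => List.count_le_length,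
        by simp, List.IsChain.singleton _⟩

theorem brSet_one_mul_add (ha : 1 ≤ a) (hab : a < b) (hbk : b ≤ k) (c : ℕ) {r : ℕ}
    (hr : r = a ∨ r = b) :
    brSet a b k 1 (k * c + r) = if c = 0 then {[r]} else ∅ := by
  ext l
  simp only [brSet, Set.mem_ofPred_eq, memBR'_one_iff (by omega : 0 < a) (by omega : 0 < b)]
  split_ifs with hc
  · subst hc
    constructor
    · rintro ⟨rfl | rfl, h⟩ <;> rcases hr with rfl | rfl <;>
        simp only [List.head?_cons, mul_zero, zero_add, Option.some.injEq, Set.mem_singleton_iff,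
          List.cons.injEq, and_true] at h ⊢ <;> omega
    · rintro rfl
      simpa using hr
  · simp only [Set.mem_empty_iff_false, iff_false]
    have hkc : k ≤ k * c := Nat.le_mul_of_pos_right k (Nat.pos_of_ne_zero hc)
    rintro ⟨rfl | rfl, h⟩ <;> rcases hr with rfl | rfl <;>
      simp only [List.head?_cons, Option.some.injEq] at h <;> omega

theorem mem_brSet_succ_succ_iff (hab : a < b) (hbk : b ≤ k) {m p : ℕ} {l : List ℕ} :
    l ∈ brSet a b k (m + 2) p ↔ (0 < p ∧ (p % k = a % k ∨ p % k = b % k)) ∧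
      ∃ c y l', l = p :: l' ∧ l' ∈ brSet a b k (m + 1) (k * c + cond y a b) ∧
        BRStep a b k p (k * c + cond y a b) := by
  constructor
  · rintro ⟨hmem, hhead⟩
    rcases l with _ | ⟨p₀, _ | ⟨p', l⟩⟩
    · simp at hhead
    · simp [memBR'] at hmem
    obtain rfl := Option.some.inj hhead
    obtain ⟨hmem', hp, hstep⟩ := memBR'_cons_cons_iff.1 hmem
    obtain ⟨hp', hp'k⟩ := hmem'.2.2.1 p' List.mem_cons_self
    obtain ⟨c, y, rfl⟩ := exists_eq_mul_add_cond hab hbk hp' hp'k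
    exact ⟨hp, c, y, _, rfl, ⟨hmem', rfl⟩, hstep⟩
  · rintro ⟨hp, c, y, _ | ⟨p', l⟩, rfl, ⟨hmem', hhead'⟩, hstep⟩
    · simp at hhead'
    obtain rfl := Option.some.inj hhead'
    exact ⟨memBR'_cons_cons_iff.2 ⟨hmem', hp, hstep⟩, rfl⟩

theorem brSet_succ_succ_mul_add_cond (ha : 1 ≤ a) (hab : a < b) (hbk : b ≤ k) (m c : ℕ)
    (x : Bool) :
    brSet a b k (m + 2) (k * (c + x.toNat) + cond x a b) =
      ((k * (c + x.toNat) + cond x a b) :: ·) ''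
        (brSet a b k (m + 1) (k * c + a) ∪ brSet a b k (m + 1) (k * c + b)) := by
  have hp : 0 < k * (c + x.toNat) + cond x a b ∧
      ((k * (c + x.toNat) + cond x a b) % k = a % k ∨
        (k * (c + x.toNat) + cond x a b) % k = b % k) := by
    rw [Nat.mul_add_mod]
    cases x
    exacts [⟨Nat.add_pos_right _ (by omega : 0 < b), .inr rfl⟩,
      ⟨Nat.add_pos_right _ (by omega : 0 < a), .inl rfl⟩]
  ext l
  simp only [mem_brSet_succ_succ_iff hab hbk, brStep_iff ha hab hbk, Nat.add_right_cancel_iff,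
    Set.mem_image, Set.mem_union, hp, true_and]
  constructor
  · rintro ⟨c', y, l', rfl, hl', rfl⟩
    cases y
    exacts [⟨l', .inr hl', rfl⟩, ⟨l', .inl hl', rfl⟩]
  · rintro ⟨l', hl' | hl', rfl⟩
    exacts [⟨c, true, l', rfl, hl', rfl⟩, ⟨c, false, l', rfl, hl', rfl⟩]

theorem brSet_succ_succ_a_eq_empty (ha : 1 ≤ a) (hab : a < b) (hbk : b ≤ k) (m : ℕ) :
    brSet a b k (m + 2) a = ∅ := by
  refine Set.eq_empty_of_forall_notMem fun l hl => ?_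
  obtain ⟨-, c, y, -, -, -, hstep⟩ := (mem_brSet_succ_succ_iff hab hbk).1 hl
  have := (brStep_iff (c := 0) (x := true) ha hab hbk).1 (by simpa using hstep)
  simp at this

def brWeight (a b k : ℕ) (u v q : ℂ) (l : List ℕ) : ℂ :=
  u ^ lcount k a l * v ^ lcount k b l * q ^ l.sum

theorem lcount_cons (k c p : ℕ) (l : List ℕ) :
    lcount k c (p :: l) = lcount k c l + if p % k = c % k then 1 else 0 := by
  simp only [lcount, List.filter_cons, decide_eq_true_eq]
  split_ifs <;> simp

theorem brWeight_cons (ha : 1 ≤ a) (hab : a < b) (hbk : b ≤ k) (u v q : ℂ) {p : ℕ} {x : Bool}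
    (hp : p % k = cond x a b % k) (l : List ℕ) :
    brWeight a b k u v q (p :: l) = cond x u v * q ^ p * brWeight a b k u v q l := by
  have hab' : a % k ≠ b % k := by
    rcases hbk.lt_or_eq with h | rfl
    · rw [Nat.mod_eq_of_lt (by omega), Nat.mod_eq_of_lt h]; omega
    · rw [Nat.mod_eq_of_lt hab, Nat.mod_self]; omega
  simp only [brWeight, lcount_cons, List.sum_cons, hp]
  cases x <;> simp only [cond_true, cond_false, hab', hab'.symm, if_true, if_false, add_zero,
    pow_add, pow_one] <;> ring

noncomputable def brGen (a b k : ℕ) (u v q : ℂ) (m p : ℕ) : ℂ :=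
  ∑ᶠ l ∈ brSet a b k m p, brWeight a b k u v q l

noncomputable def brLevelGen (a b k : ℕ) (u v q : ℂ) (m c : ℕ) : ℂ :=
  brGen a b k u v q m (k * c + a) + brGen a b k u v q m (k * c + b)

theorem brLevelGen_one (ha : 1 ≤ a) (hab : a < b) (hbk : b ≤ k) (u v q : ℂ) (c : ℕ) :
    brLevelGen a b k u v q 1 c = if c = 0 then u * q ^ a + v * q ^ b else 0 := by
  rw [brLevelGen, brGen, brGen, brSet_one_mul_add ha hab hbk c (.inl rfl),
    brSet_one_mul_add ha hab hbk c (.inr rfl)]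
  split_ifs
  · rw [finsum_mem_singleton, finsum_mem_singleton,
      brWeight_cons ha hab hbk u v q (p := a) (x := true) rfl,
      brWeight_cons ha hab hbk u v q (p := b) (x := false) rfl]
    simp [brWeight, lcount]
  · simp

theorem brGen_succ_succ_mul_add_cond (ha : 1 ≤ a) (hab : a < b) (hbk : b ≤ k) (u v q : ℂ) (m c : ℕ)
    (x : Bool) :
    brGen a b k u v q (m + 2) (k * (c + x.toNat) + cond x a b) =
      cond x u v * q ^ (k * (c + x.toNat) + cond x a b) * brLevelGen a b k u v q (m + 1) c := by
  have hdisj : Disjoint (brSet a b k (m + 1) (k * c + a)) (brSet a b k (m + 1) (k * c + b)) :=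
    Set.disjoint_left.2 fun l h₁ h₂ => by
      have := h₁.2.symm.trans h₂.2
      simp only [Option.some.injEq, Nat.add_left_cancel_iff] at this
      omega
  rw [brGen, brSet_succ_succ_mul_add_cond ha hab hbk, finsum_mem_image List.cons_injective.injOn,
    finsum_mem_congr rfl fun l _ => brWeight_cons ha hab hbk u v q (Nat.mul_add_mod ..) l,
    ← mul_finsum_mem, finsum_mem_union hdisj (brSet_finite ..) (brSet_finite ..)]
  rfl

theorem brGen_succ_succ_a_eq_zero (ha : 1 ≤ a) (hab : a < b) (hbk : b ≤ k) (u v q : ℂ) (m : ℕ) :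
    brGen a b k u v q (m + 2) a = 0 := by
  rw [brGen, brSet_succ_succ_a_eq_empty ha hab hbk, finsum_mem_empty]

theorem brGen_succ_succ_mul_add_a (ha : 1 ≤ a) (hab : a < b) (hbk : b ≤ k) (u v q : ℂ)
    (m c : ℕ) :
    brGen a b k u v q (m + 2) (k * (c + 1) + a) =
      u * q ^ (k * (c + 1) + a) * brLevelGen a b k u v q (m + 1) c :=
  brGen_succ_succ_mul_add_cond ha hab hbk u v q m c true

theorem brGen_succ_succ_mul_add_b (ha : 1 ≤ a) (hab : a < b) (hbk : b ≤ k) (u v q : ℂ)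
    (m c : ℕ) :
    brGen a b k u v q (m + 2) (k * c + b) =
      v * q ^ (k * c + b) * brLevelGen a b k u v q (m + 1) c :=
  brGen_succ_succ_mul_add_cond ha hab hbk u v q m c false

theorem brLevelGen_eq (ha : 1 ≤ a) (hab : a < b) (hbk : b ≤ k) {q : ℂ} (hq : ‖q‖ < 1)
    (u v : ℂ) (n c : ℕ) :
    brLevelGen a b k u v q (n + 1) c = (u * q ^ a + v * q ^ b) * u ^ c * v ^ (n - c) *
      q ^ (a * c + b * (n - c) + k * (c + 1).choose 2) * gbinom (q ^ k) n c := by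
  have hQ : ‖q ^ k‖ < 1 := by
    rw [norm_pow]
    exact pow_lt_one₀ (norm_nonneg q) hq (by omega)
  induction n generalizing c with
  | zero =>
    rw [brLevelGen_one ha hab hbk]
    rcases c with _ | c
    · simp [gbinom_zero_right hQ]
    · simp [gbinom_of_lt _ c.succ_pos]
  | succ n ih =>
    rcases c with _ | c
    · have h₀ := brGen_succ_succ_mul_add_b ha hab hbk u v q n 0
      rw [mul_zero, zero_add] at h₀
      rw [brLevelGen, mul_zero, zero_add, zero_add, brGen_succ_succ_a_eq_zero ha hab hbk, h₀, ih,
        gbinom_zero_right hQ, gbinom_zero_right hQ, Nat.sub_zero, Nat.sub_zero]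
      ring
    · rw [brLevelGen, brGen_succ_succ_mul_add_a ha hab hbk, brGen_succ_succ_mul_add_b ha hab hbk,
        ih, ih, gbinom_succ_succ hQ, Nat.choose_succ_succ' (c + 1), Nat.choose_one_right,
        Nat.add_sub_add_right]
      rcases Nat.lt_or_ge c n with h | h
      · obtain ⟨d, rfl⟩ := Nat.exists_eq_add_of_lt h
        rw [show c + d + 1 - c = d + 1 by omega, show c + d + 1 - (c + 1) = d by omega]
        ring
      · rw [gbinom_of_lt _ (by omega : n < c + 1)]
        ring

end Partitions

/-- Generating functions for the partitions in `BR'_{a,b,k}(m,h,a)` (largest part `k(h+1)+a`)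
and `BR'_{a,b,k}(m,h,b)` (largest part `kh+b`). -/
theorem gen_BR'_mha (a b k m h : ℕ) (ha : 1 ≤ a) (hab : a < b) (hbk : b ≤ k)
    (hm : 2 ≤ m) (hh : h ≤ m - 2) (q u v : ℂ) (hq : ‖q‖ < 1) :
    (∑ᶠ l ∈ {l : List ℕ | memBR' a b k m l ∧ l.head? = some (k * (h + 1) + a)},
        u ^ lcount k a l * v ^ lcount k b l * q ^ l.sum
      = (u * q ^ a + v * q ^ b) * u ^ (h + 1) * v ^ (m - h - 2) *
          q ^ ((m - 1) * b + k * Nat.choose (h + 1) 2 + (k - b + a) * (h + 1)) *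
          gbinom (q ^ k) (m - 2) h)
    ∧ (∑ᶠ l ∈ {l : List ℕ | memBR' a b k m l ∧ l.head? = some (k * h + b)},
        u ^ lcount k a l * v ^ lcount k b l * q ^ l.sum
      = (u * q ^ a + v * q ^ b) * u ^ h * v ^ (m - h - 1) *
          q ^ ((m - 1) * b + k * Nat.choose (h + 1) 2 + (k - b + a) * h) *
          gbinom (q ^ k) (m - 2) h) := by
  obtain ⟨n, rfl⟩ : ∃ n, m = h + n + 2 := ⟨m - h - 2, by omega⟩
  obtain ⟨e, rfl⟩ : ∃ e, k = b + e := ⟨k - b, by omega⟩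
  have hsub : b + e - b + a = e + a := by omega
  refine ⟨?_, ?_⟩
  · change brGen a b (b + e) u v q (h + n + 2) ((b + e) * (h + 1) + a) = _
    rw [brGen_succ_succ_mul_add_a ha hab hbk, brLevelGen_eq ha hab hbk hq, hsub,
      show h + n + 2 - h - 2 = n by omega, show h + n + 2 - 1 = h + n + 1 by omega,
      show h + n + 2 - 2 = h + n by omega, show h + n - h = n by omega]
    ring
  · change brGen a b (b + e) u v q (h + n + 2) ((b + e) * h + b) = _
    rw [brGen_succ_succ_mul_add_b ha hab hbk, brLevelGen_eq ha hab hbk hq, hsub,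
      show h + n + 2 - h - 1 = n + 1 by omega, show h + n + 2 - 1 = h + n + 1 by omega,
      show h + n + 2 - 2 = h + n by omega, show h + n - h = n by omega]
    ring
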